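/- Assume l > 2 and l ≠ 2* = 2n/(n-2). Then every periodic solution of system (S_l) is constant; that is, (S_l) admits no nonconstant periodic solutions. -/

import Mathlib

/-!
With `f = α x + y = ẋ`, the system is the damped oscillator `ẍ = (α + γ) ẋ - (η + αγ) x - K x|x|^(q-2)`,
whose energy `ẋ²/2 + (η + αγ) x²/2 + K |x|^q / q` changes at the rate `(α + γ) ẋ²`. The damping
coefficient `α + γ = 4/(l - 2) + 2 - n` vanishes exactly at `l = 2*`, so otherwise the energy
divided by `α + γ` is monotone; on a periodic solution it is then constant, which forces `ẋ = 0`.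
-/

open Function

theorem Function.Periodic.eq_of_monotone {α β : Type*} [AddCommGroup α] [LinearOrder α]
    [IsOrderedAddMonoid α] [Archimedean α] [PartialOrder β] {f : α → β} {T : α}
    (hf : Periodic f T) (hT : 0 < T) (hmono : Monotone f) (s t : α) : f s = f t := by
  obtain ⟨u, ⟨hsu, hut⟩, hu⟩ := hf.exists_mem_Ico hT t s
  rw [hu]
  exact le_antisymm (hmono hsu) (hf s ▸ hmono hut.le)

theorem eq_zero_of_periodic_of_hasDerivAt_nonneg {H φ : ℝ → ℝ} {T : ℝ} (hH : Periodic H T)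
    (hT : 0 < T) (hderiv : ∀ t, HasDerivAt H (φ t) t) (hφ : ∀ t, 0 ≤ φ t) (t : ℝ) : φ t = 0 := by
  have hconst : H = fun _ => H 0 :=
    funext fun s => hH.eq_of_monotone hT (monotone_of_hasDerivAt_nonneg hderiv hφ) s 0
  have hderiv_t := hderiv t
  rw [hconst] at hderiv_t
  exact hderiv_t.unique (hasDerivAt_const t (H 0))

noncomputable def energy (α γ η K q x y : ℝ) : ℝ :=
  (α * x + y) ^ 2 / 2 + (η + α * γ) * x ^ 2 / 2 + K * |x| ^ q / q

section System

variable {α γ η K q : ℝ} {x y : ℝ → ℝ}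

theorem hasDerivAt_energy (hq : 1 < q) {t : ℝ} (hx : HasDerivAt x (α * x t + y t) t)
    (hy : HasDerivAt y (-η * x t + γ * y t - K * x t * |x t| ^ (q - 2)) t) :
    HasDerivAt (fun s => energy α γ η K q (x s) (y s)) ((α + γ) * (α * x t + y t) ^ 2) t := by
  have hpow := (hasDerivAt_abs_rpow (x t) hq).comp t hx
  have henergy := (((hx.const_mul α).add hy).pow 2).div_const 2
    |>.add (((hx.pow 2).const_mul (η + α * γ)).div_const 2)
    |>.add ((hpow.const_mul K).div_const q)
  refine henergy.congr_deriv ?_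
  simp only [Pi.add_apply]
  field_simp
  ring

theorem eq_of_periodic_solution (hq : 1 < q) (hc : α + γ ≠ 0)
    (hx : ∀ t, HasDerivAt x (α * x t + y t) t)
    (hy : ∀ t, HasDerivAt y (-η * x t + γ * y t - K * x t * |x t| ^ (q - 2)) t)
    {T : ℝ} (hT : 0 < T) (hxT : Periodic x T) (hyT : Periodic y T) (s t : ℝ) :
    x s = x t ∧ y s = y t := by
  have hlyapunov : ∀ t, HasDerivAt (fun s => energy α γ η K q (x s) (y s) / (α + γ))
      ((α * x t + y t) ^ 2) t := fun t =>
    ((hasDerivAt_energy hq (hx t) (hy t)).div_const _).congr_deriv (by field_simp)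
  have hperiodic : Periodic (fun s => energy α γ η K q (x s) (y s) / (α + γ)) T := fun t => by
    simp only [hxT t, hyT t]
  have hvel : ∀ t, α * x t + y t = 0 := fun t =>
    pow_eq_zero_iff two_ne_zero |>.mp <|
      eq_zero_of_periodic_of_hasDerivAt_nonneg hperiodic hT hlyapunov (fun _ => sq_nonneg _) t
  have hxconst : x s = x t :=
    is_const_of_deriv_eq_zero (fun t => (hx t).differentiableAt)
      (fun t => (hx t).deriv.trans (hvel t)) s t
  refine ⟨hxconst, ?_⟩
  linear_combination hvel s - hvel t - α * hxconst

end System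

theorem add_ne_zero_of_ne_critical {n l α γ : ℝ} (hl : 2 < l) (hlne : l ≠ 2 * n / (n - 2))
    (hα : α = 2 / (l - 2)) (hγ : γ = α + 2 - n) : α + γ ≠ 0 := by
  intro hc
  subst hα hγ
  have hl2 : l - 2 ≠ 0 := by linarith
  have hn : n - 2 = 4 / (l - 2) := by linear_combination -hc
  have hn2 : n - 2 ≠ 0 := by rw [hn]; exact div_ne_zero four_ne_zero hl2
  apply hlne
  rw [eq_div_iff hn2]
  field_simp at hn
  linarith

theorem stmt10_general (n : ℕ) (η K q l α γ : ℝ)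
    (hq : 2 < q) (hl : 2 < l) (hlne : l ≠ 2 * (n:ℝ) / ((n:ℝ) - 2))
    (hα : α = 2 / (l - 2)) (hγ : γ = α + 2 - (n:ℝ))
    (x y : ℝ → ℝ)
    (hx : ContDiff ℝ 1 x) (hy : ContDiff ℝ 1 y)
    (hsys : ∀ t : ℝ,
      deriv x t = α * x t + y t ∧
      deriv y t = -η * x t + γ * y t - K * x t * |x t| ^ (q - 2))
    (T : ℝ) (hT : 0 < T)
    (hper : ∀ t : ℝ, x (t + T) = x t ∧ y (t + T) = y t) :
    ∀ s t : ℝ, x s = x t ∧ y s = y t :=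
  eq_of_periodic_solution (by linarith) (add_ne_zero_of_ne_critical hl hlne hα hγ)
    (fun t => (hsys t).1 ▸ (hx.differentiable one_ne_zero t).hasDerivAt)
    (fun t => (hsys t).2 ▸ (hy.differentiable one_ne_zero t).hasDerivAt)
    hT (fun t => (hper t).1) (fun t => (hper t).2)

theorem stmt10 (n : ℕ) (hn : 2 < n) (η K q l α γ : ℝ)
    (hq : 2 < q) (hl : 2 < l) (hlne : l ≠ 2 * (n:ℝ) / ((n:ℝ) - 2))
    (hα : α = 2 / (l - 2)) (hγ : γ = α + 2 - (n:ℝ))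
    (x y : ℝ → ℝ)
    (hx : ContDiff ℝ 1 x) (hy : ContDiff ℝ 1 y)
    (hsys : ∀ t : ℝ,
      deriv x t = α * x t + y t ∧
      deriv y t = -η * x t + γ * y t - K * x t * |x t| ^ (q - 2))
    (T : ℝ) (hT : 0 < T)
    (hper : ∀ t : ℝ, x (t + T) = x t ∧ y (t + T) = y t) :
    ∀ s t : ℝ, x s = x t ∧ y s = y t :=
  stmt10_general n η K q l α γ hq hl hlne hα hγ x y hx hy hsys T hT hper
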